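/- arXiv:2603.14378 — 5 statements merged into one kernel-verified Lean document; each statement's English description precedes it below -/
import Mathlib

section
/- Let d ≥ 2 be even and let G be a finite abelian group. Then there exists ε ∈ {1, −1} such that, in MvPolynomial G ℂ, det_d(C^G(x)) = ε · |G|^{|G|(d/2−1)} · ∏_{χ : G →* ℂˣ} (Σ_{g∈G} χ(g) · x_g), the product taken over all |G| complex characters of G. -/
open Classical in
/-- Cayley's combinatorial hyperdeterminant of a `d`-way hypermatrix:
`det_d(X) = Σ_{σ₂,…,σ_d ∈ Perm I} sgn(σ₂)⋯sgn(σ_d) ∏_i X(i, σ₂ i, …, σ_d i)`. -/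
noncomputable def hdet {I : Type*} [Fintype I] [DecidableEq I] {R : Type*} [CommRing R]
    (d : ℕ) (X : (Fin d → I) → R) : R :=
  ∑ σ : Fin d → Equiv.Perm I,
    if ∀ h : 0 < d, σ ⟨0, h⟩ = 1 then
      (∏ ℓ, (Equiv.Perm.sign (σ ℓ) : ℤ)) • ∏ i, X fun ℓ => σ ℓ i
    else 0
/-- The group hypermatrix: entry at `(g₁, …, g_d)` is the variable `x_{g₁⋯g_d}`. -/
noncomputable def groupHyper (d : ℕ) (G : Type*) [Group G] :
    (Fin d → G) → MvPolynomial G ℂ :=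
  fun g => MvPolynomial.X (List.ofFn g).prod

/-!
Transform `C^G` in every index by the character table `U`, `U k g = χ_k(g)`. By orthogonality of
characters the result is diagonal, with entry `|G|^(d-1) · L_χ` at `(χ, …, χ)`, where
`L_χ = Σ_g χ(g) x_g`; so its hyperdeterminant is `|G|^((d-1)|G|) ∏_χ L_χ`. For even `d`,
summing over all `d`-tuples of permutations (not only those with `σ₁ = 1`) gives `|G|! · det_d`,
and for that sum a Cauchy–Binet expansion shows that the transformation multiplies it by
`det(U)^d`. Finally
`U Uᵀ = |G| · P` with `P` the permutation matrix of `χ ↦ χ⁻¹`, so `det(U)^2 = ±|G|^|G|`.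
-/

open Finset Equiv

section Hyperdeterminant

variable {I R : Type*} [Fintype I] [DecidableEq I] [CommRing R] {d : ℕ}

def hdetTerm (X : (Fin d → I) → R) (σ : Fin d → Perm I) : R :=
  (∏ ℓ, (Perm.sign (σ ℓ) : ℤ)) • ∏ i, X fun ℓ => σ ℓ i

variable (d) in
def fullHdet (X : (Fin d → I) → R) : R :=
  ∑ σ, hdetTerm X σ

lemma hdetTerm_mul_const (hde : Even d) (X : (Fin d → I) → R) (σ : Fin d → Perm I)
    (τ : Perm I) : hdetTerm X (σ * Function.const _ τ) = hdetTerm X σ := by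
  have hsign : ∏ ℓ, (Perm.sign ((σ * Function.const _ τ : Fin d → Perm I) ℓ) : ℤ) =
      ∏ ℓ, (Perm.sign (σ ℓ) : ℤ) := by
    obtain ⟨m, rfl⟩ := hde
    simp [prod_mul_distrib, ← two_mul, pow_mul, ← Units.val_pow_eq_pow_val, Int.units_sq]
  have hX : ∏ i, X (fun ℓ => (σ * Function.const _ τ : Fin d → Perm I) ℓ i) =
      ∏ i, X fun ℓ => σ ℓ i :=
    Equiv.prod_comp τ fun i => X fun ℓ => σ ℓ i
  rw [hdetTerm, hdetTerm, hsign, hX]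

lemma hdet_eq_sum_hdetTerm [NeZero d] (X : (Fin d → I) → R) :
    hdet d X = ∑ σ : Fin d → Perm I, if σ 0 = 1 then hdetTerm X σ else 0 := by
  refine sum_congr rfl fun σ _ => ?_
  simp only [show ∀ h : 0 < d, (⟨0, h⟩ : Fin d) = 0 from fun _ => rfl, NeZero.pos d,
    forall_const]
  rfl

lemma fullHdet_eq_card_perm_smul_hdet (hde : Even d) [NeZero d] (X : (Fin d → I) → R) :
    fullHdet d X = Fintype.card (Perm I) • hdet d X := by
  calc fullHdet d X
        = ∑ τ : Perm I, ∑ σ : Fin d → Perm I, if σ 0 = τ then hdetTerm X σ else 0 := by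
        rw [sum_comm]; simp [fullHdet]
    _ = ∑ τ : Perm I, ∑ σ : Fin d → Perm I, if σ 0 = 1 then hdetTerm X σ else 0 := by
        refine sum_congr rfl fun τ _ => ?_
        rw [← Equiv.sum_comp (Equiv.mulRight (Function.const (Fin d) τ))]
        simp [hdetTerm_mul_const hde]
    _ = Fintype.card (Perm I) • hdet d X := by
        rw [sum_const, card_univ, hdet_eq_sum_hdetTerm]

lemma sum_prod_det_submatrix_mul (A : Matrix I I R) (Φ : (Fin d → I → I) → R) :
    ∑ g : Fin d → I → I, (∏ ℓ, (A.submatrix id (g ℓ)).det) * Φ g =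
      A.det ^ d *
        ∑ σ : Fin d → Perm I, (∏ ℓ, (Perm.sign (σ ℓ) : R)) * Φ fun ℓ => σ ℓ := by
  have hperm : ∀ σ : Fin d → Perm I,
      ∏ ℓ, (A.submatrix id (σ ℓ)).det = (∏ ℓ, (Perm.sign (σ ℓ) : R)) * A.det ^ d := by
    intro σ
    simp [Matrix.det_permute', prod_mul_distrib]
  rw [mul_sum]
  refine (Fintype.sum_of_injective (fun (σ : Fin d → Perm I) ℓ => ⇑(σ ℓ)) ?_ _ _ ?_
    fun σ => ?_).symm
  · intro σ τ h
    funext ℓ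
    exact Equiv.coe_fn_injective (congrFun h ℓ)
  · intro g hg
    obtain ⟨ℓ, hℓ⟩ : ∃ ℓ, ¬ Function.Injective (g ℓ) := by
      by_contra! h
      exact hg ⟨fun ℓ => Equiv.ofBijective _ (Finite.injective_iff_bijective.mp (h ℓ)), rfl⟩
    obtain ⟨i, j, hij, hne⟩ : ∃ i j, g ℓ i = g ℓ j ∧ i ≠ j := by
      simpa [Function.Injective] using hℓ
    rw [prod_eq_zero (mem_univ ℓ) (Matrix.det_zero_of_column_eq hne fun k => by simp [hij]),
      zero_mul]
  · rw [hperm]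
    ring

def hyperTransform (A : Matrix I I R) (X : (Fin d → I) → R) : (Fin d → I) → R :=
  fun js => ∑ gs, (∏ ℓ, A (js ℓ) (gs ℓ)) * X gs

lemma fullHdet_hyperTransform (A : Matrix I I R) (X : (Fin d → I) → R) :
    fullHdet d (hyperTransform A X) = A.det ^ d * fullHdet d X := by
  have expand : fullHdet d (hyperTransform A X) = ∑ g : Fin d → I → I,
      (∏ ℓ, (A.submatrix id (g ℓ)).det) * ∏ i, X fun ℓ => g ℓ i := by
    simp only [fullHdet, hdetTerm, hyperTransform, Matrix.det_apply', Fintype.prod_sum,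
      sum_mul, zsmul_eq_mul, Int.cast_prod, mul_sum, prod_mul_distrib]
    rw [sum_comm]
    refine Fintype.sum_equiv (Equiv.piComm fun (_ : I) (_ : Fin d) => I) _ _ fun G => ?_
    refine sum_congr rfl fun σ _ => ?_
    simp only [Equiv.piComm_apply, Matrix.submatrix_apply, id]
    rw [prod_comm (f := fun i ℓ => A (σ ℓ i) (G i ℓ))]
    ring
  rw [expand, sum_prod_det_submatrix_mul]
  simp [fullHdet, hdetTerm, zsmul_eq_mul]

lemma hdet_hyperTransform [IsAddTorsionFree R] (hde : Even d) [NeZero d] (A : Matrix I I R)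
    (X : (Fin d → I) → R) : hdet d (hyperTransform A X) = A.det ^ d * hdet d X := by
  apply nsmul_right_injective (Fintype.card_ne_zero (α := Perm I))
  dsimp only
  rw [← fullHdet_eq_card_perm_smul_hdet hde, fullHdet_hyperTransform,
    fullHdet_eq_card_perm_smul_hdet hde, mul_smul_comm]

lemma hdet_diagonal [NeZero d] (D : I → R) :
    hdet d (fun js => if ∀ ℓ, js ℓ = js 0 then D (js 0) else 0) = ∏ i, D i := by
  rw [hdet_eq_sum_hdetTerm, Fintype.sum_eq_single 1]
  · simp [hdetTerm]
  · intro σ hσ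
    split_ifs with hσ0
    · obtain ⟨ℓ, i, hi⟩ : ∃ ℓ i, σ ℓ i ≠ σ 0 i := by
        by_contra! h
        exact hσ (funext fun ℓ => Equiv.ext fun i => by simpa [hσ0] using h ℓ i)
      rw [hdetTerm, prod_eq_zero (mem_univ i) (if_neg fun h => hi (h ℓ)), smul_zero]
    · rfl

end Hyperdeterminant

section Characters

variable {G : Type*} [CommGroup G] [Fintype G]

lemma sum_char_eq_ite [DecidableEq (G →* ℂˣ)] (ψ : G →* ℂˣ) :
    ∑ g, (ψ g : ℂ) = if ψ = 1 then (Fintype.card G : ℂ) else 0 := by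
  have hinj : Function.Injective ((Units.coeHom ℂ).comp : (G →* ℂˣ) → G →* ℂ) :=
    fun _ _ h => MonoidHom.ext fun g => Units.ext (DFunLike.congr_fun h g)
  classical
  simpa [← hinj.eq_iff] using sum_hom_units ((Units.coeHom ℂ).comp ψ)

lemma sum_prod_char_smul_prod {M : Type*} [AddCommGroup M] [Module ℂ M] {m : ℕ}
    (χ : Fin (m + 1) → G →* ℂˣ) (f : G → M) :
    ∑ gs : Fin (m + 1) → G, (∏ ℓ, (χ ℓ (gs ℓ) : ℂ)) • f (∏ ℓ, gs ℓ) =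
      if ∀ ℓ, χ ℓ = χ 0 then (Fintype.card G : ℂ) ^ m • ∑ g, (χ 0 g : ℂ) • f g else 0 := by
  classical
  set ψ : Fin m → G →* ℂˣ := fun i => χ i.succ / χ 0
  have hsplit : ∀ (a : G) (hs : Fin m → G),
      (∏ ℓ, (χ ℓ ((Fin.cons a hs : Fin (m + 1) → G) ℓ) : ℂ)) •
        f (∏ ℓ, (Fin.cons a hs : Fin (m + 1) → G) ℓ) =
        (∏ i, (ψ i (hs i) : ℂ)) • ((χ 0 (a * ∏ i, hs i) : ℂ) • f (a * ∏ i, hs i)) := by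
    intro a hs
    simp only [Fin.prod_univ_succ, Fin.cons_zero, Fin.cons_succ, map_mul, map_prod, smul_smul]
    congr 1
    norm_cast
    simp only [ψ, MonoidHom.div_apply, prod_div_distrib]
    rw [mul_left_comm, div_mul_cancel]
  -- Writing `gs = (a, hs)` and `g = a * ∏ hs`, the sum factors into character sums of the `ψ i`.
  calc ∑ gs : Fin (m + 1) → G, (∏ ℓ, (χ ℓ (gs ℓ) : ℂ)) • f (∏ ℓ, gs ℓ)
      = ∑ hs : Fin m → G,
          (∏ i, (ψ i (hs i) : ℂ)) • ∑ a, (χ 0 (a * ∏ i, hs i) : ℂ) • f (a * ∏ i, hs i) := by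
        rw [← (Fin.consEquiv fun _ => G).sum_comp, Fintype.sum_prod_type, sum_comm]
        simp only [Fin.consEquiv_apply, hsplit, smul_sum]
    _ = (∏ i, ∑ h, (ψ i h : ℂ)) • ∑ g, (χ 0 g : ℂ) • f g := by
        simp only [Fintype.prod_sum, sum_smul]
        refine sum_congr rfl fun hs _ => ?_
        exact congrArg _ (Fintype.sum_equiv (Equiv.mulRight (∏ i, hs i)) _ _ fun a => rfl)
    _ = _ := by
        simp only [sum_char_eq_ite, Fintype.prod_ite_zero, prod_const, card_univ,
          Fintype.card_fin]
        have hψ : (∀ i, ψ i = 1) ↔ ∀ ℓ, χ ℓ = χ 0 := by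
          rw [Fin.forall_fin_succ, and_iff_right rfl]
          simp only [ψ, DFunLike.ext_iff, MonoidHom.div_apply, MonoidHom.one_apply, div_eq_one]
        rw [if_congr hψ rfl rfl, ite_smul, zero_smul]

lemma nonempty_equiv_char : Nonempty (G ≃ (G →* ℂˣ)) :=
  have : NeZero (Monoid.exponent G : ℂ) :=
    ⟨Nat.cast_ne_zero.mpr Monoid.exponent_ne_zero_of_finite⟩
  (CommGroup.monoidHom_mulEquiv_of_hasEnoughRootsOfUnity G ℂ).map fun e => e.toEquiv.symm

variable [DecidableEq G]

def charMatrix (e : G ≃ (G →* ℂˣ)) : Matrix G G ℂ :=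
  Matrix.of fun k g => (e k g : ℂ)

lemma charMatrix_mul_transpose (e : G ≃ (G →* ℂˣ)) :
    charMatrix e * (charMatrix e).transpose =
      (Fintype.card G : ℂ) • Perm.permMatrix ℂ (e.trans ((Equiv.inv _).trans e.symm)) := by
  ext k k'
  have hk : (e k * e k' = 1) ↔ (e.symm (e k)⁻¹ = k') := by
    rw [Equiv.symm_apply_eq]
    exact (inv_eq_iff_mul_eq_one (G := G →* ℂˣ)).symm
  classical
  simp only [Matrix.mul_apply, charMatrix, Matrix.transpose_apply, Matrix.of_apply,
    ← Units.val_mul, ← MonoidHom.mul_apply, sum_char_eq_ite, hk]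
  simp [PEquiv.toMatrix_apply]

lemma exists_det_charMatrix_pow_two_mul (e : G ≃ (G →* ℂˣ)) (k : ℕ) :
    ∃ s : ℤˣ, (charMatrix e).det ^ (2 * k) =
      s * (Fintype.card G : ℂ) ^ (Fintype.card G * k) := by
  refine ⟨Perm.sign (e.trans ((Equiv.inv _).trans e.symm)) ^ k, ?_⟩
  have h := congrArg Matrix.det (charMatrix_mul_transpose e)
  rw [Matrix.det_mul, Matrix.det_transpose, Matrix.det_smul, Matrix.det_permutation, ← sq] at h
  rw [pow_mul, h, mul_pow, ← pow_mul]
  push_cast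
  ring

open MvPolynomial in
lemma hyperTransform_charMatrix_groupHyper (e : G ≃ (G →* ℂˣ)) (m : ℕ) :
    hyperTransform ((charMatrix e).map C) (groupHyper (m + 1) G) = fun ks =>
      if ∀ ℓ, ks ℓ = ks 0 then
        C ((Fintype.card G : ℂ) ^ m) * ∑ g, C (e (ks 0) g : ℂ) * X g
      else 0 := by
  funext ks
  have h := sum_prod_char_smul_prod (fun ℓ => e (ks ℓ)) (X : G → MvPolynomial G ℂ)
  simp only [e.injective.eq_iff] at h
  simp only [hyperTransform, groupHyper, List.prod_ofFn, Matrix.map_apply, charMatrix,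
    Matrix.of_apply, ← map_prod, C_mul', h]

open MvPolynomial in
lemma C_det_charMatrix_pow_mul_hdet_groupHyper [Fintype (G →* ℂˣ)] (e : G ≃ (G →* ℂˣ))
    {m : ℕ} (hm : Even (m + 1)) :
    C ((charMatrix e).det ^ (m + 1)) * hdet (m + 1) (groupHyper (m + 1) G) =
      C ((Fintype.card G : ℂ) ^ (m * Fintype.card G)) *
        ∏ χ : G →* ℂˣ, ∑ g, C (χ g : ℂ) * X g := by
  have h := hdet_hyperTransform hm ((charMatrix e).map C) (groupHyper (m + 1) G)
  rw [hyperTransform_charMatrix_groupHyper,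
    hdet_diagonal fun k => C ((Fintype.card G : ℂ) ^ m) * ∑ g, C (e k g : ℂ) * X g,
    prod_mul_distrib, prod_const, card_univ, ← map_pow, ← pow_mul,
    e.prod_comp fun χ => ∑ g, C (χ g : ℂ) * X g, ← RingHom.mapMatrix_apply,
    ← RingHom.map_det, ← map_pow] at h
  exact h.symm

end Characters

/-- For even `d ≥ 2` and a finite abelian group `G`, the group hyperdeterminant factors into
linear forms: `det_d(C^G(x)) = ± |G|^{|G|(d/2-1)} ∏_χ (Σ_g χ(g) x_g)`, the product over all
complex characters `χ : G →* ℂˣ` (which form a finite set of cardinality `|G|`). -/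
theorem abelian_group_hyperdeterminant (d : ℕ) (hd : 2 ≤ d) (hde : Even d)
    (G : Type*) [CommGroup G] [Fintype G] [DecidableEq G] [Fintype (G →* ℂˣ)] :
    ∃ ε : ℂ, (ε = 1 ∨ ε = -1) ∧
      hdet d (groupHyper d G) =
        MvPolynomial.C (ε * (Fintype.card G : ℂ) ^ (Fintype.card G * (d / 2 - 1))) *
          ∏ χ : G →* ℂˣ, ∑ g : G, MvPolynomial.C ((χ g : ℂ)) * MvPolynomial.X g := by
  obtain ⟨j, rfl⟩ : ∃ j, d = 2 * j + 1 + 1 := by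
    obtain ⟨k, rfl⟩ := hde
    exact ⟨k - 1, by omega⟩
  obtain ⟨e⟩ := nonempty_equiv_char (G := G)
  obtain ⟨s, hs⟩ := exists_det_charMatrix_pow_two_mul e (j + 1)
  have key := C_det_charMatrix_pow_mul_hdet_groupHyper e hde
  rw [show 2 * j + 1 + 1 = 2 * (j + 1) by ring, hs] at key
  set n := Fintype.card G
  set ε : ℂ := ((s : ℤ) : ℂ)
  have hε : ε * ε = 1 := by
    rw [← Int.cast_mul, ← Units.val_mul, Int.units_mul_self, Units.val_one, Int.cast_one]
  refine ⟨ε, by rcases Int.units_eq_one_or s with h | h <;> simp [ε, h], ?_⟩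
  have hC : (MvPolynomial.C (ε * (n : ℂ) ^ (n * (j + 1))) : MvPolynomial G ℂ) ≠ 0 := by
    rw [Ne, MvPolynomial.C_eq_zero]
    exact mul_ne_zero (left_ne_zero_of_mul_eq_one hε)
      (pow_ne_zero _ (Nat.cast_ne_zero.mpr Fintype.card_ne_zero))
  apply mul_left_cancel₀ hC
  rw [show 2 * j + 1 + 1 = 2 * (j + 1) by ring, key, ← mul_assoc, ← map_mul,
    show 2 * (j + 1) / 2 - 1 = j by omega]
  congr 2
  linear_combination (-(n : ℂ) ^ (n * (2 * j + 1))) * hε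
end

section
/- Let d ≥ 2 be even and let X : I^d → ℂ be a d-way hypermatrix on a finite index type I with |I| = N. For matrices g₁,…,g_d ∈ Matrix I I ℂ, define the transformed hypermatrix ((g₁,…,g_d)·X)(i₁,…,i_d) := Σ_{j₁,…,j_d ∈ I} (g₁)_{i₁j₁}⋯(g_d)_{i_dj_d} · X(j₁,…,j_d). Then det_d((g₁,…,g_d)·X) = det(g₁)⋯det(g_d) · det_d(X). -/
theorem hdet_eq_zero_of_slices {I : Type*} [Fintype I] [DecidableEq I]
    (d : ℕ) (hde : Even d) (X : (Fin d → I) → ℂ)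
    (k : Fin d) (a b : I) (hab : a ≠ b)
    (H : ∀ v : Fin d → I, X (Function.update v k a) = X (Function.update v k b)) :
    hdet d X = 0 := by
  classical
  have hd0 : 0 < d := k.pos
  have Hc : ∀ (v : Fin d → I) (c : I),
      X (Function.update v k (Equiv.swap a b c)) = X (Function.update v k c) := by
    intro v c
    rcases eq_or_ne c a with rfl | ha
    · rw [Equiv.swap_apply_left]; exact (H v).symm
    rcases eq_or_ne c b with rfl | hb
    · rw [Equiv.swap_apply_right]; exact H v
    · rw [Equiv.swap_apply_of_ne_of_ne ha hb]
  have Hv : ∀ v : Fin d → I, X (Function.update v k (Equiv.swap a b (v k))) = X v := by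
    intro v; rw [Hc v (v k), Function.update_eq_self]
  set T : (Fin d → Equiv.Perm I) → ℂ := fun σ =>
    if ∀ h : 0 < d, σ ⟨0, h⟩ = 1 then
      (∏ ℓ, (Equiv.Perm.sign (σ ℓ) : ℤ)) • ∏ i, X fun ℓ => σ ℓ i
    else 0 with hT
  have hhd : hdet d X = ∑ σ : Fin d → Equiv.Perm I, T σ := rfl
  suffices h : hdet d X = - hdet d X by
    have h2 : hdet d X + hdet d X = 0 := by nth_rewrite 1 [h]; ring
    exact add_self_eq_zero.mp h2
  have main : ∀ Φ : (Fin d → Equiv.Perm I) → (Fin d → Equiv.Perm I),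
      Function.Bijective Φ → (∀ σ, T σ = - T (Φ σ)) → hdet d X = - hdet d X := by
    intro Φ hbij key
    calc hdet d X = ∑ σ : Fin d → Equiv.Perm I, T σ := hhd
      _ = ∑ σ : Fin d → Equiv.Perm I, - T σ :=
        Fintype.sum_bijective Φ hbij T (fun σ => - T σ) key
      _ = - ∑ σ : Fin d → Equiv.Perm I, T σ := by simp
      _ = - hdet d X := by rw [hhd]
  by_cases hk : k = (⟨0, hd0⟩ : Fin d)
  · -- mode 0 : postcompose every σ ℓ (ℓ ≠ k) with the swap, and reindex the product
    refine main (fun σ ℓ => if ℓ = k then σ ℓ else σ ℓ * Equiv.swap a b) ?_ ?_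
    · apply Function.Involutive.bijective
      intro σ; funext ℓ
      by_cases h : ℓ = k <;> simp [h, mul_assoc]
    · intro σ
      have hcond : ∀ h : 0 < d,
          (if (⟨0, h⟩ : Fin d) = k then σ ⟨0, h⟩ else σ ⟨0, h⟩ * Equiv.swap a b) = σ ⟨0, h⟩ :=
        fun h => if_pos hk.symm
      by_cases hc : ∀ h : 0 < d, σ ⟨0, h⟩ = 1
      · have hσk : σ k = 1 := by rw [hk]; exact hc hd0
        rw [hT]
        simp only [hcond]
        rw [if_pos hc, if_pos hc]
        have hP : (∏ i, X fun ℓ => (if ℓ = k then σ ℓ else σ ℓ * Equiv.swap a b) i)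
            = ∏ i, X fun ℓ => σ ℓ i := by
          rw [← Equiv.prod_comp (Equiv.swap a b)
            (fun j => X fun ℓ => (if ℓ = k then σ ℓ else σ ℓ * Equiv.swap a b) j)]
          refine Finset.prod_congr rfl fun i _ => ?_
          have hfun : (fun ℓ => (if ℓ = k then σ ℓ else σ ℓ * Equiv.swap a b) (Equiv.swap a b i))
              = Function.update (fun ℓ => σ ℓ i) k (Equiv.swap a b i) := by
            funext ℓ
            by_cases h : ℓ = k
            · subst h; simp [hσk]
            · simp [h, Function.update_of_ne h]
          rw [hfun]
          have := Hv (fun ℓ => σ ℓ i)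
          simp only [hσk, Equiv.Perm.one_apply] at this
          exact this
        have hcΦ : (∏ ℓ, ((Equiv.Perm.sign ((fun ℓ => if ℓ = k then σ ℓ else σ ℓ * Equiv.swap a b) ℓ)) : ℤ))
            = - ∏ ℓ, (Equiv.Perm.sign (σ ℓ) : ℤ) := by
          have hfac : ∀ ℓ : Fin d,
              ((Equiv.Perm.sign (if ℓ = k then σ ℓ else σ ℓ * Equiv.swap a b)) : ℤ)
              = (Equiv.Perm.sign (σ ℓ) : ℤ) * (if ℓ = k then 1 else -1) := by
            intro ℓ
            by_cases h : ℓ = k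
            · simp [h]
            · simp [h, Equiv.Perm.sign_mul, Equiv.Perm.sign_swap hab]
          rw [Finset.prod_congr rfl fun ℓ _ => hfac ℓ, Finset.prod_mul_distrib]
          have h1 : (∏ ℓ : Fin d, (if ℓ = k then (1 : ℤ) else -1)) = -1 := by
            rw [← Finset.mul_prod_erase Finset.univ _ (Finset.mem_univ k), if_pos rfl, one_mul]
            rw [Finset.prod_congr rfl fun x hx => if_neg (Finset.ne_of_mem_erase hx),
              Finset.prod_const, Finset.card_erase_of_mem (Finset.mem_univ k)]
            simp only [Finset.card_univ, Fintype.card_fin]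
            exact Odd.neg_one_pow (Nat.Even.sub_odd hd0 hde odd_one)
          rw [h1]; ring
        rw [hP, hcΦ, neg_smul, neg_neg]
      · rw [hT]
        simp only [hcond]
        rw [if_neg hc, if_neg hc, neg_zero]
  · -- other modes : precompose σ k with the swap
    refine main (fun σ => Function.update σ k (Equiv.swap a b * σ k)) ?_ ?_
    · apply Function.Involutive.bijective
      intro σ
      simp only [Function.update_idem, Function.update_self, ← mul_assoc,
        Equiv.swap_mul_self, one_mul, Function.update_eq_self]
    · intro σ
      have hcond : ∀ h : 0 < d,
          Function.update σ k (Equiv.swap a b * σ k) ⟨0, h⟩ = σ ⟨0, h⟩ :=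
        fun h => Function.update_of_ne (fun heq => hk heq.symm) _ _
      by_cases hc : ∀ h : 0 < d, σ ⟨0, h⟩ = 1
      · rw [hT]
        simp only [hcond]
        rw [if_pos hc, if_pos hc]
        have hP : (∏ i, X fun ℓ => Function.update σ k (Equiv.swap a b * σ k) ℓ i)
            = ∏ i, X fun ℓ => σ ℓ i := by
          refine Finset.prod_congr rfl fun i _ => ?_
          have hfun : (fun ℓ => Function.update σ k (Equiv.swap a b * σ k) ℓ i)
              = Function.update (fun ℓ => σ ℓ i) k (Equiv.swap a b (σ k i)) := by
            funext ℓ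
            by_cases h : ℓ = k
            · subst h; simp
            · simp [Function.update_of_ne h, h]
          rw [hfun]
          exact Hv (fun ℓ => σ ℓ i)
        have hcΦ : (∏ ℓ, ((Equiv.Perm.sign (Function.update σ k (Equiv.swap a b * σ k) ℓ)) : ℤ))
            = - ∏ ℓ, (Equiv.Perm.sign (σ ℓ) : ℤ) := by
          have hfac : ∀ ℓ : Fin d,
              ((Equiv.Perm.sign (Function.update σ k (Equiv.swap a b * σ k) ℓ)) : ℤ)
              = (if ℓ = k then (-1 : ℤ) else 1) * (Equiv.Perm.sign (σ ℓ) : ℤ) := by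
            intro ℓ
            by_cases h : ℓ = k
            · subst h
              simp [Equiv.Perm.sign_mul, Equiv.Perm.sign_swap hab]
            · simp [Function.update_of_ne h, h]
          rw [Finset.prod_congr rfl fun ℓ _ => hfac ℓ, Finset.prod_mul_distrib,
            Finset.prod_ite_eq' Finset.univ k (fun _ => (-1 : ℤ)),
            if_pos (Finset.mem_univ k)]
          ring
        rw [hP, hcΦ, neg_smul, neg_neg]
      · rw [hT]
        simp only [hcond]
        rw [if_neg hc, if_neg hc, neg_zero]

theorem hdet_comp_perms {I : Type*} [Fintype I] [DecidableEq I]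
    (d : ℕ) (hd0 : 0 < d) (hde : Even d) (X : (Fin d → I) → ℂ)
    (π : Fin d → Equiv.Perm I) :
    hdet d (fun v => X fun k => π k (v k))
      = (∏ k, (Equiv.Perm.sign (π k) : ℤ)) • hdet d X := by
  classical
  set z : Fin d := ⟨0, hd0⟩ with hz
  set s : ℤ := ∏ k, (Equiv.Perm.sign (π k) : ℤ) with hs
  have hss : s * s = 1 := by
    rw [hs, ← Finset.prod_mul_distrib]
    have : ∀ k : Fin d, (Equiv.Perm.sign (π k) : ℤ) * (Equiv.Perm.sign (π k) : ℤ) = 1 := by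
      intro k
      rw [← Units.val_mul, Int.units_mul_self, Units.val_one]
    simp [this]
  set Φ : (Fin d → Equiv.Perm I) → (Fin d → Equiv.Perm I) :=
    fun σ ℓ => π ℓ * σ ℓ * (π z)⁻¹ with hΦ
  have hbij : Function.Bijective Φ := by
    refine Function.bijective_iff_has_inverse.mpr ⟨fun τ ℓ => (π ℓ)⁻¹ * τ ℓ * π z, ?_, ?_⟩
    · intro σ; funext ℓ; simp [hΦ, mul_assoc]
    · intro τ; funext ℓ; simp [hΦ, mul_assoc]
  have key : ∀ σ : Fin d → Equiv.Perm I,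
      (if ∀ h : 0 < d, σ ⟨0, h⟩ = 1 then
        (∏ ℓ, (Equiv.Perm.sign (σ ℓ) : ℤ)) • ∏ i, X fun k => π k (σ k i)
      else 0)
      = s • (if ∀ h : 0 < d, (Φ σ) ⟨0, h⟩ = 1 then
        (∏ ℓ, (Equiv.Perm.sign ((Φ σ) ℓ) : ℤ)) • ∏ i, X fun ℓ => (Φ σ) ℓ i
      else 0) := by
    intro σ
    have hcond : (∀ h : 0 < d, (Φ σ) ⟨0, h⟩ = 1) ↔ (∀ h : 0 < d, σ ⟨0, h⟩ = 1) := by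
      constructor <;> intro h h'
      · have h1 : π z * σ z * (π z)⁻¹ = 1 := h hd0
        have h2 := congrArg (fun x => (π z)⁻¹ * x * π z) h1
        simpa [mul_assoc] using h2
      · have h1 : σ z = 1 := h hd0
        show π z * σ z * (π z)⁻¹ = 1
        simp [h1]
    by_cases hc : ∀ h : 0 < d, σ ⟨0, h⟩ = 1
    · rw [if_pos hc, if_pos (hcond.mpr hc)]
      have hP : (∏ i, X fun ℓ => (Φ σ) ℓ i) = ∏ i, X fun k => π k (σ k i) := by
        rw [← Equiv.prod_comp (π z) (fun j => X fun ℓ => (Φ σ) ℓ j)]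
        refine Finset.prod_congr rfl fun i _ => ?_
        congr 1
        funext ℓ
        show (π ℓ * σ ℓ * (π z)⁻¹) (π z i) = π ℓ (σ ℓ i)
        simp
      have hcΦ : (∏ ℓ, (Equiv.Perm.sign ((Φ σ) ℓ) : ℤ))
          = s * ∏ ℓ, (Equiv.Perm.sign (σ ℓ) : ℤ) := by
        have hfac : ∀ ℓ : Fin d, (Equiv.Perm.sign ((Φ σ) ℓ) : ℤ)
            = ((Equiv.Perm.sign (π ℓ) : ℤ) * (Equiv.Perm.sign (σ ℓ) : ℤ))
              * (Equiv.Perm.sign (π z) : ℤ) := by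
          intro ℓ
          show ((Equiv.Perm.sign (π ℓ * σ ℓ * (π z)⁻¹)) : ℤ) = _
          rw [Equiv.Perm.sign_mul, Equiv.Perm.sign_mul, Equiv.Perm.sign_inv,
            Units.val_mul, Units.val_mul]
        rw [Finset.prod_congr rfl fun ℓ _ => hfac ℓ, Finset.prod_mul_distrib,
          Finset.prod_mul_distrib, Finset.prod_const, Finset.card_univ, Fintype.card_fin]
        have hpow : ((Equiv.Perm.sign (π z) : ℤ)) ^ d = 1 := by
          rcases Int.units_eq_one_or (Equiv.Perm.sign (π z)) with h | h <;> rw [h]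
          · simp
          · simp [hde.neg_one_pow]
        rw [hpow, hs]; ring
      rw [hP, hcΦ, smul_smul, ← mul_assoc, hss, one_mul]
    · rw [if_neg hc, if_neg (fun h => hc (hcond.mp h)), smul_zero]
  calc hdet d (fun v => X fun k => π k (v k))
      = ∑ σ : Fin d → Equiv.Perm I,
        (if ∀ h : 0 < d, σ ⟨0, h⟩ = 1 then
          (∏ ℓ, (Equiv.Perm.sign (σ ℓ) : ℤ)) • ∏ i, X fun k => π k (σ k i)
        else 0) := rfl
    _ = ∑ σ : Fin d → Equiv.Perm I,
        s • (if ∀ h : 0 < d, σ ⟨0, h⟩ = 1 then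
          (∏ ℓ, (Equiv.Perm.sign (σ ℓ) : ℤ)) • ∏ i, X fun ℓ => σ ℓ i
        else 0) := Fintype.sum_bijective Φ hbij _ _ key
    _ = s • hdet d X := by rw [← Finset.smul_sum]; rfl

theorem hdet_expand {I : Type*} [Fintype I] [DecidableEq I]
    (d : ℕ) (X : (Fin d → I) → ℂ) (g : Fin d → Matrix I I ℂ) :
    hdet d (fun v => ∑ j : Fin d → I, (∏ k, g k (v k) (j k)) * X j)
      = ∑ f : Fin d → (I → I),
          (∏ k, ∏ a, g k a (f k a)) * hdet d (fun v => X fun k => f k (v k)) := by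
  classical
  simp only [hdet, Finset.mul_sum]
  rw [Finset.sum_comm]
  refine Finset.sum_congr rfl fun σ _ => ?_
  by_cases hc : ∀ h : 0 < d, σ ⟨0, h⟩ = 1
  · simp only [if_pos hc]
    have h1 : (∏ i, ∑ j : Fin d → I, (∏ k, g k (σ k i) (j k)) * X j)
        = ∑ f : Fin d → (I → I),
            (∏ k, ∏ a, g k a (f k a)) * ∏ i, X fun k => f k (σ k i) := by
      rw [Fintype.prod_sum (fun i (j : Fin d → I) => (∏ k, g k (σ k i) (j k)) * X j)]
      refine (Fintype.sum_bijective (fun f : Fin d → (I → I) => fun i k => f k (σ k i))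
        ?_ _ _ fun f => ?_).symm
      · refine Function.bijective_iff_has_inverse.mpr
          ⟨fun J k a => J ((σ k)⁻¹ a) k, ?_, ?_⟩
        · intro f; funext k a; simp
        · intro J; funext i k; simp
      · rw [Finset.prod_mul_distrib]
        congr 1
        symm
        rw [Finset.prod_comm]
        exact Finset.prod_congr rfl fun k _ =>
          Equiv.prod_comp (σ k) (fun a => g k a (f k a))
    rw [h1, Finset.smul_sum]
    refine Finset.sum_congr rfl fun f _ => ?_
    rw [mul_smul_comm]
  · simp only [if_neg hc, mul_zero, Finset.sum_const_zero]

/-- **SL-invariance of the hyperdeterminant.** Acting by matrices `g₁, …, g_d` on the `d`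
modes of a hypermatrix multiplies the hyperdeterminant by `det(g₁) ⋯ det(g_d)`. -/
theorem hdet_relative_invariance (d : ℕ) (hd : 2 ≤ d) (hde : Even d)
    (I : Type*) [Fintype I] [DecidableEq I]
    (X : (Fin d → I) → ℂ) (g : Fin d → Matrix I I ℂ) :
    hdet d (fun v => ∑ j : Fin d → I, (∏ k, g k (v k) (j k)) * X j) =
      (∏ k, (g k).det) * hdet d X := by
  classical
  have hd0 : 0 < d := by omega
  rw [hdet_expand]
  have hvanish : ∀ f : Fin d → (I → I), f ∈ Finset.univ →
      f ∉ Finset.univ.filter (fun f : Fin d → I → I => ∀ k, Function.Bijective (f k)) →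
      (∏ k, ∏ a, g k a (f k a)) * hdet d (fun v => X fun k => f k (v k)) = 0 := by
    intro f _ hf
    simp only [Finset.mem_filter, Finset.mem_univ, true_and, not_forall] at hf
    obtain ⟨k, hk⟩ := hf
    have hni : ¬ Function.Injective (f k) := fun hinj =>
      hk (Finite.injective_iff_bijective.mp hinj)
    rw [Function.not_injective_iff] at hni
    obtain ⟨a, b, hfab, hab⟩ := hni
    have h0 : hdet d (fun v => X fun m => f m (v m)) = 0 := by
      apply hdet_eq_zero_of_slices d hde _ k a b hab
      intro v
      have h1 : ∀ c : I, (fun m => f m (Function.update v k c m))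
          = Function.update (fun m => f m (v m)) k (f k c) := by
        intro c; funext m
        by_cases hm : m = k
        · subst hm; simp
        · simp [Function.update_of_ne hm]
      show X (fun m => f m (Function.update v k a m)) = X (fun m => f m (Function.update v k b m))
      rw [h1 a, h1 b, hfab]
    rw [h0, mul_zero]
  rw [← Finset.sum_subset (Finset.filter_subset _ _) hvanish]
  rw [Finset.sum_bij (t := (Finset.univ : Finset (Fin d → Equiv.Perm I)))
    (g := fun π : Fin d → Equiv.Perm I =>
      (∏ k, ∏ a, g k a (π k a)) * ((∏ k, (Equiv.Perm.sign (π k) : ℤ)) • hdet d X))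
    (i := fun f hf k => Equiv.ofBijective (f k) (by exact (Finset.mem_filter.mp hf).2 k))
    (hi := fun f hf => Finset.mem_univ _)
    (i_inj := ?_) (i_surj := ?_) (h := ?_)]
  · have hterm : ∀ π : Fin d → Equiv.Perm I,
        (∏ k, ∏ a, g k a (π k a)) * ((∏ k, (Equiv.Perm.sign (π k) : ℤ)) • hdet d X)
        = (∏ k, ((Equiv.Perm.sign (π k) : ℤ) : ℂ) * ∏ a, g k a (π k a)) * hdet d X := by
      intro π
      rw [zsmul_eq_mul, Int.cast_prod, Finset.prod_mul_distrib]
      ring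
    rw [Finset.sum_congr rfl fun π _ => hterm π, ← Finset.sum_mul]
    congr 1
    rw [← Fintype.prod_sum (fun k (τ : Equiv.Perm I) =>
      ((Equiv.Perm.sign τ : ℤ) : ℂ) * ∏ a, g k a (τ a))]
    refine Finset.prod_congr rfl fun k _ => ?_
    rw [← Matrix.det_transpose (g k), Matrix.det_apply]
    refine Finset.sum_congr rfl fun τ _ => ?_
    simp [Matrix.transpose_apply, Units.smul_def, zsmul_eq_mul]
  · intro f1 h1 f2 h2 heq
    funext k a
    calc f1 k a = (Equiv.ofBijective (f1 k) ((Finset.mem_filter.mp h1).2 k)) a := rfl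
      _ = (Equiv.ofBijective (f2 k) ((Finset.mem_filter.mp h2).2 k)) a :=
          congrArg (fun e : I ≃ I => e a) (congrFun heq k)
      _ = f2 k a := rfl
  · intro π _
    refine ⟨fun k => ⇑(π k), Finset.mem_filter.mpr ⟨Finset.mem_univ _, fun k => (π k).bijective⟩, ?_⟩
    funext k
    exact Equiv.ext fun a => rfl
  · intro f hf
    have hE : (fun v : Fin d → I => X fun m => f m (v m))
        = fun v : Fin d → I => X fun m =>
            (Equiv.ofBijective (f m) ((Finset.mem_filter.mp hf).2 m)) (v m) := rfl
    rw [hE, hdet_comp_perms d hd0 hde X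
      (fun m => Equiv.ofBijective (f m) ((Finset.mem_filter.mp hf).2 m))]
    rfl
end

section
/- Let d ≥ 1, let I and J be finite index types, and let Y : I^d → R and Z : J^d → R be d-way hypermatrices over a commutative ring R. Define their direct sum Y ⊕ Z : (I ⊕ J)^d → R by (Y ⊕ Z)(k₁,…,k_d) = Y(i₁,…,i_d) if all k_ℓ = inl(i_ℓ), (Y ⊕ Z)(k₁,…,k_d) = Z(j₁,…,j_d) if all k_ℓ = inr(j_ℓ), and 0 otherwise. Then det_d(Y ⊕ Z) = det_d(Y) · det_d(Z). -/
/-!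
A tuple of permutations of `I ⊕ J` contributes to `det_d(Y ⊕ Z)` only if every permutation in
it preserves the two blocks: otherwise, since its first entry is the identity, some factor of its
product is an entry of `Y ⊕ Z` with one index in `I` and another in `J`, hence zero.
Block-preserving tuples are exactly the pairs of tuples `(α, β)` of permutations of `I` and of
`J`, and since `sgn (α ⊕ β) = sgn α · sgn β`, the term of `α ⊕ β` is the product of the term of
`α` in `det_d(Y)` and the term of `β` in `det_d(Z)`.
-/

open Equiv Finset

theorem Equiv.sumCongr_inj {α₁ α₂ β₁ β₂ : Type*} {e e' : α₁ ≃ α₂} {f f' : β₁ ≃ β₂} :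
    sumCongr e f = sumCongr e' f' ↔ e = e' ∧ f = f' := by
  refine ⟨fun h => ⟨?_, ?_⟩, fun ⟨he, hf⟩ => he ▸ hf ▸ rfl⟩ <;> ext x
  · simpa using congr($h (Sum.inl x))
  · simpa using congr($h (Sum.inr x))

theorem Equiv.sumCongr_eq_one_iff {α β : Type*} {e : Perm α} {f : Perm β} :
    sumCongr e f = 1 ↔ e = 1 ∧ f = 1 := by
  rw [← Perm.sumCongr_one, Perm.sumCongr, sumCongr_inj]

section SumCongrTuple

variable {d : ℕ} {I J : Type*}

def sumCongrTuple (p : (Fin d → Perm I) × (Fin d → Perm J)) : Fin d → Perm (I ⊕ J) :=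
  fun ℓ => sumCongr (p.1 ℓ) (p.2 ℓ)

theorem sumCongrTuple_injective : Function.Injective (@sumCongrTuple d I J) := by
  rintro ⟨α, β⟩ ⟨α', β'⟩ h
  have hαβ ℓ := sumCongr_inj.mp (congr_fun h ℓ)
  exact Prod.ext (funext fun ℓ => (hαβ ℓ).1) (funext fun ℓ => (hαβ ℓ).2)

theorem exists_apply_inl_eq_inr_of_notMem_range_sumCongrTuple [Finite I] [Finite J]
    {σ : Fin d → Perm (I ⊕ J)} (hσ : σ ∉ Set.range sumCongrTuple) :
    ∃ ℓ i j, σ ℓ (Sum.inl i) = Sum.inr j := by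
  by_contra! hσ_inl
  have hmem ℓ : σ ℓ ∈ (Perm.sumCongrHom I J).range := by
    apply Perm.mem_sumCongrHom_range_of_perm_mapsTo_inl
    rintro _ ⟨i, rfl⟩
    cases h : σ ℓ (Sum.inl i) with
    | inl i' => exact ⟨i', rfl⟩
    | inr j => exact absurd h (hσ_inl ℓ i j)
  choose p hp using hmem
  exact hσ ⟨(fun ℓ => (p ℓ).1, fun ℓ => (p ℓ).2), funext hp⟩

end SumCongrTuple

open Classical in
noncomputable def hdetSummand {I : Type*} [Fintype I] [DecidableEq I] {R : Type*} [CommRing R]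
    (d : ℕ) (X : (Fin d → I) → R) (σ : Fin d → Perm I) : R :=
  if ∀ h : 0 < d, σ ⟨0, h⟩ = 1 then
    (∏ ℓ, (Perm.sign (σ ℓ) : ℤ)) • ∏ i, X fun ℓ => σ ℓ i
  else 0

section HdetSummand

variable {d : ℕ} {R : Type*} [CommRing R] {I J : Type*} [Fintype I] [DecidableEq I]
  [Fintype J] [DecidableEq J]

theorem hdet_eq_sum_hdetSummand (X : (Fin d → I) → R) :
    hdet d X = ∑ σ, hdetSummand d X σ :=
  rfl

theorem hdetSummand_sumCongrTuple {Y : (Fin d → I) → R} {Z : (Fin d → J) → R}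
    {W : (Fin d → I ⊕ J) → R}
    (hY : ∀ v : Fin d → I, W (fun ℓ => Sum.inl (v ℓ)) = Y v)
    (hZ : ∀ v : Fin d → J, W (fun ℓ => Sum.inr (v ℓ)) = Z v)
    (p : (Fin d → Perm I) × (Fin d → Perm J)) :
    hdetSummand d W (sumCongrTuple p) = hdetSummand d Y p.1 * hdetSummand d Z p.2 := by
  obtain ⟨α, β⟩ := p
  have hsign : ∏ ℓ, (Perm.sign (sumCongr (α ℓ) (β ℓ)) : ℤ) =
      (∏ ℓ, (Perm.sign (α ℓ) : ℤ)) * ∏ ℓ, (Perm.sign (β ℓ) : ℤ) := by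
    simp only [Perm.sign_sumCongr, Units.val_mul, prod_mul_distrib]
  have hprod : ∏ k, W (fun ℓ => sumCongr (α ℓ) (β ℓ) k) =
      (∏ i, Y fun ℓ => α ℓ i) * ∏ j, Z fun ℓ => β ℓ j := by
    simp only [Fintype.prod_sum_type, sumCongr_apply, Sum.map_inl, Sum.map_inr, hY, hZ]
  simp only [hdetSummand, sumCongrTuple, sumCongr_eq_one_iff, forall_and, hsign, hprod]
  by_cases hα : ∀ h : 0 < d, α ⟨0, h⟩ = 1 <;> by_cases hβ : ∀ h : 0 < d, β ⟨0, h⟩ = 1 <;>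
    simp only [hα, hβ, implies_true, and_self, and_false, false_and, if_true, if_false,
      smul_mul_smul_comm, mul_zero, zero_mul]

theorem hdetSummand_eq_zero_of_apply_inl_eq_inr {W : (Fin d → I ⊕ J) → R}
    (h0 : ∀ k : Fin d → I ⊕ J,
      (¬ ∃ v : Fin d → I, k = fun ℓ => Sum.inl (v ℓ)) →
      (¬ ∃ v : Fin d → J, k = fun ℓ => Sum.inr (v ℓ)) → W k = 0)
    {σ : Fin d → Perm (I ⊕ J)} {ℓ₀ : Fin d} {i : I} {j : J}
    (hσ : σ ℓ₀ (Sum.inl i) = Sum.inr j) :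
    hdetSummand d W σ = 0 := by
  have hd : 0 < d := ℓ₀.pos
  unfold hdetSummand
  split_ifs with hσ₀
  · -- the factor at `inl i` has first index `inl i` (as `σ 0 = 1`) and `ℓ₀`-th index `inr j`
    rw [prod_eq_zero (mem_univ (Sum.inl i)), smul_zero]
    apply h0
    · rintro ⟨v, hv⟩
      simpa [hσ] using congr_fun hv ℓ₀
    · rintro ⟨v, hv⟩
      simpa [hσ₀ hd] using congr_fun hv ⟨0, hd⟩
  · rfl

end HdetSummand

theorem hdet_direct_sum_general (d : ℕ) (R : Type*) [CommRing R]
    (I J : Type*) [Fintype I] [DecidableEq I] [Fintype J] [DecidableEq J]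
    (Y : (Fin d → I) → R) (Z : (Fin d → J) → R) (W : (Fin d → I ⊕ J) → R)
    (hY : ∀ v : Fin d → I, W (fun ℓ => Sum.inl (v ℓ)) = Y v)
    (hZ : ∀ v : Fin d → J, W (fun ℓ => Sum.inr (v ℓ)) = Z v)
    (h0 : ∀ k : Fin d → I ⊕ J,
      (¬ ∃ v : Fin d → I, k = fun ℓ => Sum.inl (v ℓ)) →
      (¬ ∃ v : Fin d → J, k = fun ℓ => Sum.inr (v ℓ)) → W k = 0) :
    hdet d W = hdet d Y * hdet d Z := by
  have hblocks : hdet d W = ∑ p, hdetSummand d W (sumCongrTuple p) := by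
    refine (Fintype.sum_of_injective _ sumCongrTuple_injective _ _ (fun σ hσ => ?_)
      fun _ => rfl).symm
    obtain ⟨ℓ, i, j, h⟩ := exists_apply_inl_eq_inr_of_notMem_range_sumCongrTuple hσ
    exact hdetSummand_eq_zero_of_apply_inl_eq_inr h0 h
  rw [hblocks, Fintype.sum_prod_type, hdet_eq_sum_hdetSummand, hdet_eq_sum_hdetSummand,
    sum_mul_sum]
  simp only [hdetSummand_sumCongrTuple hY hZ]

/-- **Multiplicativity of the hyperdeterminant with respect to direct sums.** If `W` is the
direct sum of the hypermatrices `Y` and `Z` (placed block-diagonally), then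
`det_d(W) = det_d(Y) · det_d(Z)`. -/
theorem hdet_direct_sum (d : ℕ) (hd : 1 ≤ d) (R : Type*) [CommRing R]
    (I J : Type*) [Fintype I] [DecidableEq I] [Fintype J] [DecidableEq J]
    (Y : (Fin d → I) → R) (Z : (Fin d → J) → R) (W : (Fin d → I ⊕ J) → R)
    (hY : ∀ v : Fin d → I, W (fun ℓ => Sum.inl (v ℓ)) = Y v)
    (hZ : ∀ v : Fin d → J, W (fun ℓ => Sum.inr (v ℓ)) = Z v)
    (h0 : ∀ k : Fin d → I ⊕ J,
      (¬ ∃ v : Fin d → I, k = fun ℓ => Sum.inl (v ℓ)) →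
      (¬ ∃ v : Fin d → J, k = fun ℓ => Sum.inr (v ℓ)) → W k = 0) :
    hdet d W = hdet d Y * hdet d Z :=
  hdet_direct_sum_general d R I J Y Z W hY hZ h0
end

section
/- Let d be odd, and let I be a finite index type with |I| ≥ 2. Then for every d-way hypermatrix X : I^d → ℂ, the fully symmetrized hyperdeterminant vanishes: Σ_{(σ₁,…,σ_d) ∈ Perm(I)^d} sgn(σ₁)⋯sgn(σ_d) · ∏_{i∈I} X(σ₁(i),…,σ_d(i)) = 0. -/
/-!
Right-multiplying every `σₖ` by the same transposition permutes the terms of the sum: the product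
over `i` is merely reindexed, while each of the `d` signs flips. For odd `d` the sum therefore
equals its own negative.
-/

open Equiv Finset

namespace Hypermatrix

variable {ι I R : Type*} [Fintype ι] [DecidableEq ι] [Fintype I] [DecidableEq I] [CommRing R]

/-- Cayley's combinatorial hyperdeterminant of `X`, times `|I|!`. -/
def symmetrizedHdet (X : (ι → I) → R) : R :=
  ∑ σ : ι → Perm I, ((∏ k, (Perm.sign (σ k) : ℤ)) : R) * ∏ i, X (fun k => σ k i)

theorem symmetrizedHdet_eq_sign_pow_mul (τ : Perm I) (X : (ι → I) → R) :
    symmetrizedHdet X = ((Perm.sign τ : ℤ) : R) ^ Fintype.card ι * symmetrizedHdet X := by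
  rw [symmetrizedHdet, mul_sum]
  refine (Fintype.sum_equiv (piCongrRight fun _ => Equiv.mulRight τ) _ _ fun σ => ?_).symm
  change _ = (∏ k, ((Perm.sign (σ k * τ) : ℤ) : R)) * ∏ i, X (fun k => (σ k * τ) i)
  have hsign : ∏ k, ((Perm.sign (σ k * τ) : ℤ) : R) =
      ((Perm.sign τ : ℤ) : R) ^ Fintype.card ι * ∏ k, ((Perm.sign (σ k) : ℤ) : R) := by
    simp only [Perm.sign_mul, Units.val_mul, Int.cast_mul, prod_mul_distrib, prod_const,
      card_univ, mul_comm]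
  have hreindex : ∏ i, X (fun k => (σ k * τ) i) = ∏ i, X (fun k => σ k i) :=
    Equiv.prod_comp τ fun i => X fun k => σ k i
  rw [hsign, hreindex, mul_assoc]

theorem symmetrizedHdet_eq_zero [NoZeroDivisors R] [CharZero R] (hι : Odd (Fintype.card ι))
    (hI : 2 ≤ Fintype.card I) (X : (ι → I) → R) : symmetrizedHdet X = 0 := by
  obtain ⟨a, b, hab⟩ := Fintype.exists_pair_of_one_lt_card hI
  have h := symmetrizedHdet_eq_sign_pow_mul (swap a b) X
  rw [Perm.sign_swap hab, Units.val_neg, Units.val_one, Int.cast_neg, Int.cast_one,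
    hι.neg_one_pow, neg_one_mul] at h
  exact self_eq_neg.mp h

end Hypermatrix

/-- For odd `d` and `|I| ≥ 2`, the fully symmetrized hyperdeterminant vanishes identically:
`Σ_{σ₁,…,σ_d} sgn(σ₁)⋯sgn(σ_d) ∏_i X(σ₁ i, …, σ_d i) = 0`. -/
theorem symmetrized_hdet_odd_vanishes (d : ℕ) (hd : Odd d)
    (I : Type*) [Fintype I] [DecidableEq I] (hI : 2 ≤ Fintype.card I)
    (X : (Fin d → I) → ℂ) :
    ∑ σ : Fin d → Equiv.Perm I,
      ((∏ k, (Equiv.Perm.sign (σ k) : ℤ)) : ℂ) * ∏ i, X (fun k => σ k i) = 0 :=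
  Hypermatrix.symmetrizedHdet_eq_zero (ι := Fin d) (by rwa [Fintype.card_fin]) hI X
end

section
/- Let d ≥ 2 be even, n ≥ 1, and let X be any n×n complex matrix. Then det_d(M^{(d)}_X) = det(X)^n · det_d(M^{(d)}_n). -/
open Classical in
/-- The shifted `d`-iterated matrix multiplication tensor `M^{(d)}_X`: the entry at
`((i₁,j₁),…,(i_d,j_d))` is `X i₁ j_d` if `j₁ = i₂, …, j_{d-1} = i_d`, and `0` otherwise. -/
noncomputable def mmt {R : Type*} [CommRing R] (d n : ℕ)
    (X : Matrix (Fin n) (Fin n) R) : (Fin d → Fin n × Fin n) → R :=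
  fun p =>
    if h : 0 < d ∧ ∀ (k : ℕ) (hk : k + 1 < d), (p ⟨k, by omega⟩).2 = (p ⟨k + 1, hk⟩).1
    then X (p ⟨0, h.1⟩).1 (p ⟨d - 1, Nat.sub_lt h.1 Nat.one_pos⟩).2
    else 0

section Aux

open Equiv Matrix Kronecker

private lemma prod_ite_all {ι R : Type*} [Fintype ι] [CommRing R]
    (c : ι → Prop) [DecidablePred c] (v : ι → R) :
    (∏ i, if c i then v i else 0) = if ∀ i, c i then ∏ i, v i else 0 := by
  by_cases h : ∀ i, c i
  · rw [if_pos h]; exact Finset.prod_congr rfl fun i _ => if_pos (h i)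
  · rw [if_neg h]
    push_neg at h
    obtain ⟨i, hi⟩ := h
    exact Finset.prod_eq_zero (Finset.mem_univ i) (if_neg hi)

open Classical in
private noncomputable def Mmat (n : ℕ) (X : Matrix (Fin n) (Fin n) ℂ)
    (a : Fin n × Fin n → Fin n) : Matrix (Fin n × Fin n) (Fin n × Fin n) ℂ :=
  fun q p => if a p = q.1 then X p.1 q.2 else 0

open Classical in
private lemma sum_eq_det {n : ℕ} (X : Matrix (Fin n) (Fin n) ℂ) (a : Fin n × Fin n → Fin n) :
    ∑ τ : Perm (Fin n × Fin n),
      (if ∀ p, a p = (τ p).1 then ((Perm.sign τ : ℤ) : ℂ) * ∏ p, X p.1 (τ p).2 else 0)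
    = (Mmat n X a).det := by
  rw [Matrix.det_apply]
  refine Finset.sum_congr rfl fun τ _ => ?_
  have h1 : ∏ p, Mmat n X a (τ p) p
      = if ∀ p, a p = (τ p).1 then ∏ p, X p.1 (τ p).2 else 0 := by
    rw [show (∏ p, Mmat n X a (τ p) p)
        = ∏ p, if a p = (τ p).1 then X p.1 (τ p).2 else 0 from rfl]
    exact prod_ite_all _ _
  rw [h1]
  by_cases h : ∀ p, a p = (τ p).1 <;>
    simp [h, Units.smul_def, zsmul_eq_mul]

open Classical in
private lemma Mmat_factor {n : ℕ} (X : Matrix (Fin n) (Fin n) ℂ) (a : Fin n × Fin n → Fin n) :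
    Mmat n X a = ((1 : Matrix (Fin n) (Fin n) ℂ) ⊗ₖ Xᵀ) * Mmat n 1 a := by
  ext ⟨i, j⟩ ⟨k, l⟩
  rw [Matrix.mul_apply, Fintype.sum_prod_type]
  simp [Mmat, Matrix.one_apply, Finset.mul_sum, mul_ite, ite_mul, eq_comm]

open Classical in
private lemma det_Mmat {n : ℕ} (X : Matrix (Fin n) (Fin n) ℂ) (a : Fin n × Fin n → Fin n) :
    (Mmat n X a).det = X.det ^ n * (Mmat n 1 a).det := by
  rw [Mmat_factor, det_mul, det_kronecker]
  simp

open Classical in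
private lemma KL {n : ℕ} (Y : Matrix (Fin n) (Fin n) ℂ) (a : Fin n × Fin n → Fin n) :
    ∑ τ : Perm (Fin n × Fin n),
      (if ∀ p, a p = (τ p).1 then ((Perm.sign τ : ℤ) : ℂ) * ∏ p, Y p.1 (τ p).2 else 0)
    = Y.det ^ n * (Mmat n 1 a).det := by
  rw [sum_eq_det, det_Mmat]

private lemma snoc_mk_lt {α : Type*} {m : ℕ} (g : Fin m → α) (τ : α) (k : ℕ)
    (hk : k < m) (hk' : k < m + 1) :
    (Fin.snoc g τ : Fin (m+1) → α) ⟨k, hk'⟩ = g ⟨k, hk⟩ := by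
  have : (⟨k, hk'⟩ : Fin (m+1)) = Fin.castSucc ⟨k, hk⟩ := rfl
  rw [this, Fin.snoc_castSucc]

private lemma snoc_mk_last {α : Type*} {m : ℕ} (g : Fin m → α) (τ : α) (k : ℕ)
    (hk' : k < m + 1) (h : k = m) :
    (Fin.snoc g τ : Fin (m+1) → α) ⟨k, hk'⟩ = τ := by
  subst h
  have : (⟨k, hk'⟩ : Fin (k+1)) = Fin.last k := rfl
  rw [this, Fin.snoc_last]

private lemma chain_snoc {n m : ℕ} (hm : 0 < m)
    (g : Fin m → Equiv.Perm (Fin n × Fin n)) (τ : Equiv.Perm (Fin n × Fin n)) :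
    (∀ (i : Fin n × Fin n) (k : ℕ) (hk : k + 1 < m + 1),
        ((Fin.snoc g τ : Fin (m+1) → Equiv.Perm (Fin n × Fin n)) ⟨k, by omega⟩ i).2
          = ((Fin.snoc g τ : Fin (m+1) → Equiv.Perm (Fin n × Fin n)) ⟨k + 1, hk⟩ i).1)
    ↔ ((∀ (i : Fin n × Fin n) (k : ℕ) (hk : k + 1 < m),
          (g ⟨k, by omega⟩ i).2 = (g ⟨k + 1, hk⟩ i).1)
        ∧ ∀ i : Fin n × Fin n, (g ⟨m - 1, by omega⟩ i).2 = (τ i).1) := by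
  constructor
  · intro h
    refine ⟨fun i k hk => ?_, fun i => ?_⟩
    · have h0 := h i k (by omega)
      rwa [snoc_mk_lt g τ k (by omega) (by omega), snoc_mk_lt g τ (k+1) hk (by omega)] at h0
    · have h0 := h i (m - 1) (by omega)
      rwa [snoc_mk_lt g τ (m-1) (by omega) (by omega),
        snoc_mk_last g τ (m-1+1) (by omega) (by omega)] at h0
  · rintro ⟨h1, h2⟩ i k hk
    by_cases hk2 : k + 1 < m
    · rw [snoc_mk_lt g τ k (by omega) (by omega), snoc_mk_lt g τ (k+1) hk2 (by omega)]
      exact h1 i k hk2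
    · have hkm : k = m - 1 := by omega
      subst hkm
      rw [snoc_mk_lt g τ (m-1) (by omega) (by omega),
        snoc_mk_last g τ (m-1+1) (by omega) (by omega)]
      exact h2 i

end Aux

open Equiv Matrix in
/-- For even `d ≥ 2`, `n ≥ 1` and any `n × n` complex matrix `X`,
`det_d(M^{(d)}_X) = det(X)^n · det_d(M^{(d)}_n)`. -/
theorem hdet_mmt_eq_det_pow_mul (d : ℕ) (hd : 2 ≤ d) (hde : Even d)
    (n : ℕ) (hn : 1 ≤ n) (X : Matrix (Fin n) (Fin n) ℂ) :
    hdet d (mmt d n X) =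
      X.det ^ n * hdet d (mmt d n (1 : Matrix (Fin n) (Fin n) ℂ)) := by
  classical
  obtain ⟨m, rfl⟩ : ∃ m, d = m + 1 := ⟨d - 1, by omega⟩
  have hm : 0 < m := by omega
  set S : ℂ := ∑ g : Fin m → Perm (Fin n × Fin n),
    if (g ⟨0, hm⟩ = 1 ∧ ∀ (i : Fin n × Fin n) (k : ℕ) (hk : k + 1 < m),
          (g ⟨k, by omega⟩ i).2 = (g ⟨k + 1, hk⟩ i).1) then
      ((∏ k, (Perm.sign (g k) : ℤ) : ℤ) : ℂ)
        * (Mmat n 1 (fun i => (g ⟨m - 1, by omega⟩ i).2)).det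
    else 0 with hS
  have key : ∀ Y : Matrix (Fin n) (Fin n) ℂ,
      hdet (m + 1) (mmt (m + 1) n Y) = Y.det ^ n * S := by
    intro Y
    rw [hdet]
    -- Step 1: normalize the inner product of `mmt` entries.
    have hprod : ∀ σ : Fin (m+1) → Perm (Fin n × Fin n),
        (∏ i, mmt (m+1) n Y fun ℓ => σ ℓ i)
        = if (∀ (i : Fin n × Fin n) (k : ℕ) (hk : k + 1 < m + 1),
              (σ ⟨k, by omega⟩ i).2 = (σ ⟨k + 1, hk⟩ i).1)
          then ∏ i, Y ((σ ⟨0, Nat.succ_pos m⟩ i).1) ((σ ⟨m, Nat.lt_succ_self m⟩ i).2)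
          else 0 := by
      intro σ
      have h1 : ∀ i : Fin n × Fin n, mmt (m+1) n Y (fun ℓ => σ ℓ i)
          = if (∀ (k : ℕ) (hk : k + 1 < m + 1),
                (σ ⟨k, by omega⟩ i).2 = (σ ⟨k + 1, hk⟩ i).1)
            then Y ((σ ⟨0, Nat.succ_pos m⟩ i).1) ((σ ⟨m, Nat.lt_succ_self m⟩ i).2)
            else 0 := by
        intro i
        rw [mmt]
        by_cases h : ∀ (k : ℕ) (hk : k + 1 < m + 1),
            (σ ⟨k, by omega⟩ i).2 = (σ ⟨k + 1, hk⟩ i).1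
        · rw [dif_pos ⟨Nat.succ_pos m, h⟩, if_pos h]; rfl
        · rw [dif_neg (fun hc => h hc.2), if_neg h]
      rw [Finset.prod_congr rfl fun i _ => h1 i, prod_ite_all]
    -- Step 2: normalize each summand.
    have hterm : ∀ σ : Fin (m+1) → Perm (Fin n × Fin n),
        (if ∀ h : 0 < m + 1, σ ⟨0, h⟩ = 1 then
            (∏ ℓ, (Perm.sign (σ ℓ) : ℤ)) • ∏ i, mmt (m+1) n Y fun ℓ => σ ℓ i
          else 0)
        = if (σ ⟨0, Nat.succ_pos m⟩ = 1
              ∧ ∀ (i : Fin n × Fin n) (k : ℕ) (hk : k + 1 < m + 1),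
                (σ ⟨k, by omega⟩ i).2 = (σ ⟨k + 1, hk⟩ i).1) then
            ((∏ ℓ, (Perm.sign (σ ℓ) : ℤ) : ℤ) : ℂ)
              * ∏ i, Y ((σ ⟨0, Nat.succ_pos m⟩ i).1) ((σ ⟨m, Nat.lt_succ_self m⟩ i).2)
          else 0 := by
      intro σ
      have hA : (∀ h : 0 < m + 1, σ ⟨0, h⟩ = 1) ↔ σ ⟨0, Nat.succ_pos m⟩ = 1 :=
        ⟨fun h => h _, fun h _ => h⟩
      rw [hprod σ]
      simp only [hA, zsmul_eq_mul, mul_ite, mul_zero, ← ite_and]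
    rw [Finset.sum_congr rfl fun σ _ => hterm σ]
    -- Step 3: reindex by splitting off the last permutation.
    rw [← Equiv.sum_comp (Fin.snocEquiv (fun _ : Fin (m+1) => Perm (Fin n × Fin n)))]
    rw [Fintype.sum_prod_type, Finset.sum_comm, hS, Finset.mul_sum]
    refine Finset.sum_congr rfl fun g _ => ?_
    simp only [Fin.snocEquiv_apply]
    by_cases hg : (g ⟨0, hm⟩ = 1 ∧ ∀ (i : Fin n × Fin n) (k : ℕ) (hk : k + 1 < m),
        (g ⟨k, by omega⟩ i).2 = (g ⟨k + 1, hk⟩ i).1)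
    · -- Step 4: evaluate the inner sum over the last permutation via `KL`.
      have hbody : ∀ τ : Perm (Fin n × Fin n),
          (if ((Fin.snoc g τ : Fin (m+1) → Perm (Fin n × Fin n)) ⟨0, Nat.succ_pos m⟩ = 1
                ∧ ∀ (i : Fin n × Fin n) (k : ℕ) (hk : k + 1 < m + 1),
                  ((Fin.snoc g τ : Fin (m+1) → Perm (Fin n × Fin n)) ⟨k, by omega⟩ i).2
                    = ((Fin.snoc g τ : Fin (m+1) → Perm (Fin n × Fin n)) ⟨k + 1, hk⟩ i).1) then
              ((∏ ℓ, (Perm.sign ((Fin.snoc g τ : Fin (m+1) → Perm (Fin n × Fin n)) ℓ) : ℤ) : ℤ) : ℂ)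
                * ∏ i, Y (((Fin.snoc g τ : Fin (m+1) → Perm (Fin n × Fin n)) ⟨0, Nat.succ_pos m⟩ i).1)
                    (((Fin.snoc g τ : Fin (m+1) → Perm (Fin n × Fin n)) ⟨m, Nat.lt_succ_self m⟩ i).2)
            else 0)
          = ((∏ k, (Perm.sign (g k) : ℤ) : ℤ) : ℂ)
              * (if ∀ p : Fin n × Fin n, (g ⟨m - 1, by omega⟩ p).2 = (τ p).1 then
                  ((Perm.sign τ : ℤ) : ℂ) * ∏ p : Fin n × Fin n, Y p.1 (τ p).2
                else 0) := by
        intro τ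
        by_cases hτ : ∀ p : Fin n × Fin n, (g ⟨m - 1, by omega⟩ p).2 = (τ p).1
        · rw [if_pos hτ, if_pos ⟨by rw [snoc_mk_lt g τ 0 hm]; exact hg.1,
            (chain_snoc hm g τ).2 ⟨hg.2, hτ⟩⟩]
          have hsgn : (∏ ℓ, (Perm.sign ((Fin.snoc g τ : Fin (m+1) → Perm (Fin n × Fin n)) ℓ) : ℤ))
              = (∏ k, (Perm.sign (g k) : ℤ)) * (Perm.sign τ : ℤ) := by
            rw [Fin.prod_univ_castSucc]
            simp [Fin.snoc_castSucc, Fin.snoc_last]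
          have hY : (∏ i, Y (((Fin.snoc g τ : Fin (m+1) → Perm (Fin n × Fin n)) ⟨0, Nat.succ_pos m⟩ i).1)
                (((Fin.snoc g τ : Fin (m+1) → Perm (Fin n × Fin n)) ⟨m, Nat.lt_succ_self m⟩ i).2))
              = ∏ p : Fin n × Fin n, Y p.1 (τ p).2 := by
            refine Finset.prod_congr rfl fun p _ => ?_
            rw [snoc_mk_lt g τ 0 hm, snoc_mk_last g τ m (Nat.lt_succ_self m) rfl, hg.1]
            simp
          rw [hsgn, hY]
          push_cast
          ring
        · rw [if_neg hτ, mul_zero, if_neg]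
          rintro ⟨-, hc⟩
          exact hτ ((chain_snoc hm g τ).1 hc).2
      rw [Finset.sum_congr rfl fun τ _ => hbody τ, ← Finset.mul_sum, KL, if_pos hg]
      ring
    · rw [if_neg hg, mul_zero]
      refine Finset.sum_eq_zero fun τ _ => ?_
      rw [if_neg]
      rintro ⟨hc1, hc2⟩
      rw [snoc_mk_lt g τ 0 hm] at hc1
      exact hg ⟨hc1, ((chain_snoc hm g τ).1 hc2).1⟩
  rw [key X, key 1, det_one, one_pow, one_mul]
end
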